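/- arXiv:math/0609263 — 4 statements merged into one kernel-verified Lean document; each statement's English description precedes it below -/
import Mathlib

section
/- The rooted tree series satisfies the formal differential equation (1 − w(x)) · x · w′(x) = w(x) in ℚ[[x]], where w′ denotes the formal derivative. Equivalently, the operator identity ∇_x = (1/(1−w)) ∇_w holds along w, with ∇_x := x d/dx. -/
/-!
Put `E(x) = Σ nⁿ xⁿ / n!`. Reading off coefficients, `x w' = E - 1`. Abel's identity
`Σ_{i+j=n, i≥1} C(n,i) i^(i-1) j^j = nⁿ` says exactly that `w E = E - 1`, i.e. `E = 1 / (1 - w)`, so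
`(1 - w) x w' = (1 - w) (E - 1) = w`.

Abel's identity for `n + 1` is the value at `x = c = 0` of the polynomial identity
`Σ_{i+j=n} (i+1)^i / (i+1)! · (x + c + j)^j / j! = (x + c + n + 1)^n / n!`, proved by induction on
`n`: both sides differentiate to the instance for `n - 1` and `c + 1`, and at `x = -(c + n + 1)` the
right side vanishes while the left side is an `(n+1)`-st forward difference of `k ↦ kⁿ`.
-/

open Finset Finset.Nat
open scoped Nat

namespace Polynomial

theorem eq_of_derivative_eq_of_eval_eq {R : Type*} [Ring R] [IsAddTorsionFree R]
    {p q : R[X]} (hd : derivative p = derivative q) (x : R) (he : p.eval x = q.eval x) :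
    p = q := by
  have hC := eq_C_of_derivative_eq_zero (p := p - q) (by rw [derivative_sub, hd, sub_self])
  have h0 : (p - q).coeff 0 = 0 := by
    simpa [he] using (congrArg (eval x) hC).symm
  rw [h0, map_zero, sub_eq_zero] at hC
  exact hC

end Polynomial

section

open Polynomial

variable {K : Type*} [Field K] [CharZero K]

theorem sum_antidiagonal_neg_one_pow_mul_pow_div_factorial_eq_zero {k m : ℕ} (hkm : k < m) :
    ∑ p ∈ antidiagonal m, (-1) ^ p.2 * (p.1 : K) ^ k / (p.1 ! * p.2 !) = 0 := by
  have hΔ := congrFun (fwdDiff_iter_pow_eq_zero_of_lt (R := K) hkm) 0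
  rw [fwdDiff_iter_eq_sum_shift, ← sum_antidiagonal_eq_sum_range_succ
    (fun i j => ((-1 : ℤ) ^ j * m.choose i) • ((0 : K) + i • (1 : K)) ^ k), Pi.zero_apply] at hΔ
  rw [← mul_right_inj' (Nat.cast_ne_zero.2 m.factorial_ne_zero), mul_zero, ← hΔ, mul_sum]
  refine sum_congr rfl fun p hp => ?_
  rw [HasAntidiagonal.mem_antidiagonal] at hp
  subst hp
  simp only [zero_add, nsmul_eq_mul, mul_one, zsmul_eq_mul]
  push_cast [Nat.cast_add_choose]
  field_simp

theorem derivative_C_div_factorial_mul_X_add_C_pow (a c : K) (j : ℕ) :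
    derivative (C (a / (j + 1)!) * (X + C c) ^ (j + 1)) = C (a / j !) * (X + C c) ^ j := by
  rw [derivative_C_mul, derivative_X_add_C_pow, ← mul_assoc, ← C_mul]
  congr 2
  rw [Nat.factorial_succ]
  push_cast
  field_simp

theorem sum_antidiagonal_abel (n : ℕ) (c : K) :
    ∑ p ∈ antidiagonal n, C ((p.1 + 1 : K) ^ p.1 / (p.1 + 1)! / p.2 !) * (X + C (c + p.2)) ^ p.2 =
      C (1 / n ! : K) * (X + C (c + n + 1)) ^ n := by
  induction n generalizing c with
  | zero => simp
  | succ n ih =>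
    refine eq_of_derivative_eq_of_eval_eq ?_ (-(c + n + 2)) ?_
    · rw [derivative_sum, sum_antidiagonal_succ']
      simp only [Nat.cast_add, Nat.cast_one, derivative_C_div_factorial_mul_X_add_C_pow]
      have hshift (y : K) : c + (y + 1) = c + 1 + y := by ring
      simp only [pow_zero, mul_one, derivative_C, zero_add, hshift]
      exact ih (c + 1)
    · simp only [eval_finsetSum, eval_mul, eval_C, eval_pow, eval_add, eval_X]
      have hroot : -(c + n + 2) + (c + (n + 1 : ℕ) + 1) = 0 := by push_cast; ring
      rw [hroot, zero_pow n.succ_ne_zero, mul_zero]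
      have hΔ := sum_antidiagonal_neg_one_pow_mul_pow_div_factorial_eq_zero (K := K)
        (Nat.lt_add_one (n + 1))
      rw [sum_antidiagonal_succ] at hΔ
      simp only [Nat.cast_zero, zero_pow n.succ_ne_zero, mul_zero, zero_div, zero_add] at hΔ
      rw [← hΔ]
      refine sum_congr rfl fun ⟨i, j⟩ hij => ?_
      rw [HasAntidiagonal.mem_antidiagonal] at hij
      have hn : (n : K) + 1 = i + j := by exact_mod_cast hij.symm
      have hbase : -(c + n + 2) + (c + j) = -(i + 1 : K) := by linear_combination -hn
      rw [hbase, neg_pow, ← hij, pow_add]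
      push_cast
      ring

end

open PowerSeries

/-- The rooted tree series `w(x) = Σ_{m≥1} (m^{m-1}/m!) x^m ∈ ℚ⟦x⟧`. -/
noncomputable def rootedTree : ℚ⟦X⟧ :=
  PowerSeries.mk fun m => if m = 0 then 0 else (m : ℚ) ^ (m - 1) / m.factorial

noncomputable def endofunctionSeries : ℚ⟦X⟧ :=
  PowerSeries.mk fun n => (n : ℚ) ^ n / n !

theorem coeff_zero_rootedTree : coeff 0 rootedTree = 0 := by
  simp [rootedTree]

theorem coeff_succ_rootedTree (n : ℕ) :
    coeff (n + 1) rootedTree = (n + 1 : ℚ) ^ n / (n + 1)! := by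
  simp [rootedTree]

theorem X_mul_derivative_rootedTree : X * d⁄dX ℚ rootedTree = endofunctionSeries - 1 := by
  ext (_ | n)
  · simp [endofunctionSeries]
  · rw [coeff_succ_X_mul, coeff_derivative, coeff_succ_rootedTree, map_sub, coeff_one,
      if_neg n.succ_ne_zero, sub_zero, endofunctionSeries, coeff_mk, Nat.factorial_succ]
    push_cast
    field_simp
    ring

theorem rootedTree_mul_endofunctionSeries :
    rootedTree * endofunctionSeries = endofunctionSeries - 1 := by
  ext (_ | n)
  · simp [rootedTree, endofunctionSeries]
  · have habel := congrArg (Polynomial.eval 0) (sum_antidiagonal_abel (K := ℚ) n 0)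
    simp only [Polynomial.eval_finsetSum, Polynomial.eval_mul, Polynomial.eval_C,
      Polynomial.eval_pow, Polynomial.eval_add, Polynomial.eval_X, zero_add] at habel
    rw [coeff_mul, sum_antidiagonal_succ, coeff_zero_rootedTree, zero_mul, zero_add, map_sub,
      coeff_one, if_neg n.succ_ne_zero, sub_zero]
    simp only [coeff_succ_rootedTree, endofunctionSeries, coeff_mk]
    convert habel using 1
    · exact sum_congr rfl fun p _ => by ring
    · rw [Nat.factorial_succ]
      push_cast
      field_simp
      ring

/-- The rooted tree series satisfies the formal differential equation
`(1 − w(x)) · x · w′(x) = w(x)`, where `w′` is the formal derivative. -/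
theorem rootedTree_ode :
    (1 - rootedTree) * (PowerSeries.X * PowerSeries.derivativeFun rootedTree) = rootedTree := by
  change (1 - rootedTree) * (X * d⁄dX ℚ rootedTree) = rootedTree
  rw [X_mul_derivative_rootedTree]
  linear_combination -rootedTree_mul_endofunctionSeries
end

section
/- Let y(x) := (1 − w(x))^{-1} ∈ ℚ[[x]]. Then x · y′(x) = y(x)² · (y(x) − 1) in ℚ[[x]]; that is, ∇_x y = (y² − y) · y, which expresses the operator identity L∇_x = (y² − y)∇_y L of the change of variables x ↦ y. -/
/-!
Since `y = (1 - w)⁻¹`, we have `y' = y² w'` and `y - 1 = w y`, so the identity reduces to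
`x w' (1 - w) = w`, the differential equation of the tree function `w = x e^w`. Comparing
coefficients of `x^(n+1)`, this is Abel's identity
`∑_{i ≤ n} C(n+1, i) i^i (n+1-i)^(n-i) = (n+1)^(n+1)`, which is the value at `x = n + 1` of the
polynomial identity `∑_{i ≤ n} C(n+1, i) (n+1-i)^(n-i) (x - (n+1-i))^i = (n+1) x^n`. The latter
follows by induction on `n`: both sides have the same derivative, and at `x = 0` the left side is,
up to sign, an `(n+1)`-st finite difference of `t ↦ t^n`, hence vanishes.
-/

open Finset

section AbelIdentity
open Polynomial

noncomputable def abelPoly (R : Type*) [CommRing R] (n : ℕ) : R[X] :=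
  ∑ i ∈ range (n + 1),
    C ((n + 1).choose i * ((n + 1 - i : ℕ) : R) ^ (n - i)) * (X - C ((n + 1 - i : ℕ) : R)) ^ i

variable {R : Type*} [CommRing R]

theorem derivative_abelPoly (n : ℕ) :
    derivative (abelPoly R (n + 1)) = C ((n + 2 : ℕ) : R) * abelPoly R n := by
  rw [abelPoly, abelPoly, derivative_sum, sum_range_succ', mul_sum]
  simp only [pow_zero, mul_one, derivative_C, add_zero, derivative_C_mul, derivative_X_sub_C_pow,
    Nat.add_sub_add_right, add_tsub_cancel_right]
  refine sum_congr rfl fun i _ ↦ ?_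
  have hchoose := congrArg (Nat.cast : ℕ → R[X]) (Nat.add_one_mul_choose_eq (n + 1) i)
  simp only [map_mul, map_pow, map_natCast]
  push_cast at hchoose ⊢
  linear_combination
    (-((n + 1 - i : ℕ) : R[X]) ^ (n - i) * (X - ((n + 1 - i : ℕ) : R[X])) ^ i) * hchoose

theorem alternating_sum_range_choose_mul_pow_eq_zero {d N : ℕ} (h : d < N) :
    ∑ i ∈ range (N + 1), (-1 : R) ^ i * N.choose i * ((N - i : ℕ) : R) ^ d = 0 := by
  have := congrFun (fwdDiff_iter_pow_eq_zero_of_lt (R := R) h) 0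
  rw [fwdDiff_iter_eq_sum_shift, ← sum_range_reflect] at this
  refine (sum_congr rfl fun i hi ↦ ?_).trans this
  have hi : i ≤ N := mem_range_succ_iff.mp hi
  simp [Nat.sub_sub_self hi, Nat.choose_symm hi, mul_assoc]

theorem abelPoly_eval_zero (n : ℕ) : (abelPoly R (n + 1)).eval 0 = 0 := by
  have h := alternating_sum_range_choose_mul_pow_eq_zero (R := R) (lt_add_one (n + 1))
  rw [sum_range_succ, Nat.sub_self, Nat.cast_zero, zero_pow n.succ_ne_zero, mul_zero,
    add_zero] at h
  rw [abelPoly, eval_finsetSum]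
  refine (sum_congr rfl fun i hi ↦ ?_).trans h
  have hi : i ≤ n + 1 := mem_range_succ_iff.mp hi
  simp only [eval_mul, eval_C, eval_pow, eval_sub, eval_X, zero_sub]
  rw [neg_pow, ← pow_sub_mul_pow ((n + 1 + 1 - i : ℕ) : R) hi]
  ring

theorem abelPoly_eq [IsAddTorsionFree R] (n : ℕ) :
    abelPoly R n = C ((n + 1 : ℕ) : R) * X ^ n := by
  induction n with
  | zero => simp [abelPoly]
  | succ n ih =>
    have hderiv : derivative (abelPoly R (n + 1) - C ((n + 2 : ℕ) : R) * X ^ (n + 1)) = 0 := by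
      rw [derivative_sub, derivative_abelPoly, ih, derivative_C_mul_X_pow, C_mul]
      push_cast
      ring
    have h := eq_C_of_derivative_eq_zero hderiv
    rw [coeff_zero_eq_eval_zero, eval_sub, abelPoly_eval_zero] at h
    rwa [eval_mul, eval_pow, eval_X, zero_pow n.succ_ne_zero, mul_zero, sub_zero, map_zero,
      sub_eq_zero] at h

theorem abel_identity [IsAddTorsionFree R] (n : ℕ) :
    ∑ i ∈ range (n + 1), (n + 1).choose i * (i : R) ^ i * ((n + 1 - i : ℕ) : R) ^ (n - i) =
      ((n + 1 : ℕ) : R) ^ (n + 1) := by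
  have h := congrArg (eval ((n + 1 : ℕ) : R)) (abelPoly_eq (R := R) n)
  rw [abelPoly, eval_finsetSum, eval_mul, eval_C, eval_pow, eval_X, ← pow_succ'] at h
  refine (sum_congr rfl fun i hi ↦ ?_).trans h
  have hi : i ≤ n + 1 := (mem_range.mp hi).le
  simp only [eval_mul, eval_C, eval_pow, eval_sub, eval_X, Nat.cast_sub hi]
  ring

end AbelIdentity

open PowerSeries

/-- The series `y(x) = (1 − w(x))⁻¹ ∈ ℚ⟦x⟧`. -/
noncomputable def ySeries : ℚ⟦X⟧ := (1 - rootedTree)⁻¹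

theorem PowerSeries.coeff_X_mul_derivative {S : Type*} [CommSemiring S] (f : S⟦X⟧) (n : ℕ) :
    coeff n (X * d⁄dX S f) = n * coeff n f := by
  cases n with
  | zero => simp
  | succ n => rw [coeff_succ_X_mul, coeff_derivative, mul_comm, Nat.cast_succ]

theorem coeff_rootedTree (n : ℕ) :
    coeff n rootedTree = if n = 0 then 0 else (n : ℚ) ^ (n - 1) / n.factorial :=
  coeff_mk _ _

theorem sum_antidiagonal_mul_coeff_rootedTree (n : ℕ) :
    ∑ p ∈ antidiagonal n, p.1 * coeff p.1 rootedTree * coeff p.2 rootedTree =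
      (n - 1) * coeff n rootedTree := by
  have hzero : coeff 0 rootedTree = 0 := by simp [coeff_rootedTree]
  rcases n with _ | m
  · simp [hzero]
  have habel := abel_identity (R := ℚ) m
  rw [sum_range_succ', Nat.choose_zero_right, Nat.cast_zero, pow_zero, Nat.sub_zero,
    Nat.sub_zero, Nat.cast_one, one_mul, one_mul] at habel
  have hterm : ∀ i ∈ range m, ((i + 1 : ℕ) : ℚ) * coeff (i + 1) rootedTree *
      coeff (m + 1 - (i + 1)) rootedTree = (m + 1).choose (i + 1) * ((i + 1 : ℕ) : ℚ) ^ (i + 1) *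
        ((m + 1 - (i + 1) : ℕ) : ℚ) ^ (m - (i + 1)) / (m + 1).factorial := by
    intro i hi
    have hi : i < m := mem_range.mp hi
    have hfact := Nat.choose_mul_factorial_mul_factorial (Nat.add_le_add_right hi.le 1)
    rw [Nat.add_sub_add_right] at hfact
    have hchoose : ((m + 1).choose (i + 1) : ℚ) ≠ 0 := by
      exact_mod_cast (Nat.choose_pos (Nat.add_le_add_right hi.le 1)).ne'
    rw [Nat.add_sub_add_right, coeff_rootedTree, coeff_rootedTree, if_neg i.succ_ne_zero,
      if_neg (Nat.sub_ne_zero_of_lt hi), ← hfact, Nat.add_sub_cancel, Nat.sub_add_eq]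
    push_cast
    field_simp
    ring
  rw [Nat.sum_antidiagonal_eq_sum_range_succ_mk, sum_range_succ, sum_range_succ',
    sum_congr rfl hterm, ← sum_div, eq_sub_of_add_eq habel, Nat.sub_self, hzero, Nat.cast_zero,
    zero_mul, zero_mul, mul_zero, add_zero, add_zero, coeff_rootedTree, if_neg m.succ_ne_zero]
  push_cast
  field_simp
  ring

theorem X_mul_derivative_rootedTree_mul_one_sub :
    X * d⁄dX ℚ rootedTree * (1 - rootedTree) = rootedTree := by
  suffices h : X * d⁄dX ℚ rootedTree * rootedTree = X * d⁄dX ℚ rootedTree - rootedTree by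
    rw [mul_one_sub, h, sub_sub_cancel]
  ext n
  rw [coeff_mul, map_sub]
  simp only [coeff_X_mul_derivative]
  rw [sum_antidiagonal_mul_coeff_rootedTree]
  ring

/-- `x · y′(x) = y(x)² · (y(x) − 1)`, i.e. `∇_x y = (y² − y) · y`: the change of
variables `x ↦ y` satisfies the operator identity `L∇_x = (y² − y)∇_y L`. -/
theorem nabla_ySeries :
    PowerSeries.X * PowerSeries.derivativeFun ySeries = ySeries ^ 2 * (ySeries - 1) := by
  have hinv : (1 - rootedTree) * ySeries = 1 :=
    PowerSeries.mul_inv_cancel _ (by simp [rootedTree])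
  have hderiv : d⁄dX ℚ ySeries = ySeries ^ 2 * d⁄dX ℚ rootedTree := by
    rw [ySeries, derivative_inv', map_sub, Derivation.map_one_eq_zero]
    ring
  calc X * d⁄dX ℚ ySeries
      = ySeries ^ 2 * (X * d⁄dX ℚ rootedTree * ((1 - rootedTree) * ySeries)) := by
        rw [hderiv, hinv]
        ring
    _ = ySeries ^ 2 * (rootedTree * ySeries) := by
        rw [← mul_assoc (X * d⁄dX ℚ rootedTree), X_mul_derivative_rootedTree_mul_one_sub]
    _ = ySeries ^ 2 * (ySeries - 1) := by linear_combination -ySeries ^ 2 * hinv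
end

section
/- Let F_i ∈ ℚ[Y] be defined by F_0(Y) = Y − 1 and F_{i+1}(Y) = (Y² − Y) · Y · F_i′(Y). Then for every i ≥ 1, the lowest-order coefficient f(i+1,i) of F_i (the coefficient of Y^{i+1}) equals (−1)^i · i!. -/
/-- The polynomials `F_0(Y) = Y − 1`, `F_{i+1}(Y) = (Y² − Y)·Y·F_i′(Y)`. -/
noncomputable def F : ℕ → Polynomial ℚ
  | 0 => Polynomial.X - 1
  | i + 1 =>
      (Polynomial.X ^ 2 - Polynomial.X) * (Polynomial.X * Polynomial.derivative (F i))

open Polynomial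

lemma F_succ_eq (i : ℕ) :
    F (i + 1) = derivative (F i) * X ^ 3 - derivative (F i) * X ^ 2 := by
  show (X ^ 2 - X) * (X * derivative (F i)) = _
  ring

lemma F_coeff_succ (i n : ℕ) :
    (F (i + 1)).coeff n =
      (if 3 ≤ n then (derivative (F i)).coeff (n - 3) else 0)
      - (if 2 ≤ n then (derivative (F i)).coeff (n - 2) else 0) := by
  rw [F_succ_eq, coeff_sub, coeff_mul_X_pow', coeff_mul_X_pow']

lemma F_one : F 1 = X ^ 3 - X ^ 2 := by
  rw [F_succ_eq]
  show derivative (X - 1) * _ - derivative (X - 1) * _ = _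
  simp

lemma F_low_coeff_zero (i : ℕ) (hi : 1 ≤ i) : ∀ k ≤ i, (F i).coeff k = 0 := by
  induction i with
  | zero => omega
  | succ i ih =>
    intro k hk
    rcases Nat.eq_or_lt_of_le hi with h1 | h1
    · -- i + 1 = 1
      have hi0 : i = 0 := by omega
      subst hi0
      rw [F_one]
      interval_cases k <;> simp
    · have hi' : 1 ≤ i := by omega
      rw [F_coeff_succ]
      have h3 : 3 ≤ k → (derivative (F i)).coeff (k - 3) = 0 := by
        intro h
        rw [coeff_derivative, ih hi' (k - 3 + 1) (by omega), zero_mul]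
      have h2 : 2 ≤ k → (derivative (F i)).coeff (k - 2) = 0 := by
        intro h
        rw [coeff_derivative, ih hi' (k - 2 + 1) (by omega), zero_mul]
      split_ifs with ha hb hb
      · rw [h3 ha, h2 hb, sub_zero]
      · omega
      · rw [h2 hb]; simp
      · simp

/-- For every `i ≥ 1`, the lowest-order coefficient `f(i+1,i)` of `F_i` (the
coefficient of `Y^{i+1}`) equals `(−1)^i · i!`. -/
theorem f_lowest_coeff (i : ℕ) (hi : 1 ≤ i) :
    (F i).coeff (i + 1) = (-1 : ℚ) ^ i * (i.factorial : ℚ) := by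
  induction i with
  | zero => omega
  | succ i ih =>
    rcases Nat.eq_or_lt_of_le hi with h1 | h1
    · have hi0 : i = 0 := by omega
      subst hi0
      rw [F_one]
      simp [coeff_X_pow]
    · have hi' : 1 ≤ i := by omega
      rw [F_coeff_succ]
      have hA : (3 : ℕ) ≤ i + 1 + 1 := by omega
      have hB : (2 : ℕ) ≤ i + 1 + 1 := by omega
      rw [if_pos hA, if_pos hB]
      have e3 : i + 1 + 1 - 3 = i - 1 := by omega
      have e2 : i + 1 + 1 - 2 = i := by omega
      rw [e3, e2, coeff_derivative, coeff_derivative]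
      have hz : (F i).coeff (i - 1 + 1) = 0 :=
        F_low_coeff_zero i hi' (i - 1 + 1) (by omega)
      rw [hz, zero_mul, zero_sub, ih hi']
      rw [Nat.factorial_succ]
      push_cast
      ring
end

section
/- Let F_i ∈ ℚ[Y] be defined by F_0(Y) = Y − 1 and F_{i+1}(Y) = (Y² − Y) · Y · F_i′(Y). Then for every i ≥ 1, the coefficient f(2,i) of Y^{2i} in F_i equals −(2i+1)!!/3, where (2i+1)!! = 1·3·5⋯(2i+1). -/
/-!
Only the two top coefficients `a_i = [Y^{2i+1}] F_i` and `b_i = [Y^{2i}] F_i` matter. Since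
`F_{i+1} = (Y³ − Y²) F_i′` and `deg F_i ≤ 2i + 1`, comparing coefficients gives
`a_{i+1} = (2i+1) a_i` and `b_{i+1} = 2i b_i − (2i+1) a_i`. Hence `a_{i+1} = (2i+1)!!`, and
starting from `b_1 = −1` the second recursion gives `b_{i+2} = −(2i+3)!! (2i+2)/3 − (2i+3)!! =
−(2i+5)!!/3`.
-/

open Nat

open Polynomial

theorem coeff_X_pow_three_sub_X_sq_mul_derivative {R : Type*} [Ring R] (p : R[X]) (n : ℕ) :
    ((X ^ 3 - X ^ 2) * derivative p).coeff (n + 3) =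
      p.coeff (n + 1) * (n + 1) - p.coeff (n + 2) * (n + 2) := by
  rw [sub_mul, coeff_sub, coeff_X_pow_mul, show n + 3 = n + 1 + 2 by rfl, coeff_X_pow_mul,
    coeff_derivative, coeff_derivative]
  norm_num [add_assoc, one_add_one_eq_two]

theorem F_succ (i : ℕ) : F (i + 1) = (X ^ 3 - X ^ 2) * derivative (F i) := by
  rw [F]
  ring

theorem coeff_F_succ_add_three (i n : ℕ) :
    (F (i + 1)).coeff (n + 3) = (F i).coeff (n + 1) * (n + 1) - (F i).coeff (n + 2) * (n + 2) := by
  rw [F_succ, coeff_X_pow_three_sub_X_sq_mul_derivative]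

theorem coeff_F_eq_zero_of_lt {i n : ℕ} (h : 2 * i + 1 < n) : (F i).coeff n = 0 := by
  induction i generalizing n with
  | zero =>
    obtain ⟨m, rfl⟩ := Nat.exists_eq_add_of_lt h
    simp [F, coeff_X, coeff_one]
  | succ i ih =>
    obtain ⟨m, rfl⟩ : ∃ m, n = m + 3 := ⟨n - 3, by omega⟩
    rw [coeff_F_succ_add_three, ih (by omega), ih (by omega)]
    ring

theorem coeff_F_two_mul_add_three (i : ℕ) :
    (F (i + 1)).coeff (2 * i + 3) = ((2 * i + 1)‼ : ℚ) := by
  induction i with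
  | zero => simp [F, coeff_X]
  | succ i ih =>
    rw [show 2 * (i + 1) + 3 = 2 * i + 2 + 3 by ring, coeff_F_succ_add_three,
      show 2 * i + 2 + 1 = 2 * i + 3 by ring, ih, coeff_F_eq_zero_of_lt (by omega),
      show 2 * (i + 1) + 1 = 2 * i + 1 + 2 by ring, doubleFactorial_add_two]
    push_cast
    ring

theorem coeff_F_two_mul_add_two (i : ℕ) :
    (F (i + 1)).coeff (2 * i + 2) = -(((2 * i + 3)‼ : ℚ) / 3) := by
  induction i with
  | zero => simp [F, coeff_X, doubleFactorial]
  | succ i ih =>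
    have hdf : ((2 * i + 3)‼ : ℚ) = (2 * i + 3) * (2 * i + 1)‼ := by
      exact_mod_cast doubleFactorial_add_two (2 * i + 1)
    rw [show 2 * (i + 1) + 2 = 2 * i + 1 + 3 by ring, coeff_F_succ_add_three,
      show 2 * i + 1 + 1 = 2 * i + 2 by ring, ih, show 2 * i + 1 + 2 = 2 * i + 3 by ring,
      coeff_F_two_mul_add_three, show 2 * (i + 1) + 3 = 2 * i + 3 + 2 by ring,
      doubleFactorial_add_two (2 * i + 3)]
    push_cast
    linear_combination hdf

/-- For every `i ≥ 1`, the coefficient `f(2,i)` of `Y^{2i}` in `F_i` equals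
`−(2i+1)!!/3`. -/
theorem f_two_eq (i : ℕ) (hi : 1 ≤ i) :
    (F i).coeff (2 * i) = -(((2 * i + 1)‼ : ℚ) / 3) := by
  obtain ⟨k, rfl⟩ := Nat.exists_eq_add_of_le' hi
  exact coeff_F_two_mul_add_two k
end
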